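/- The function d defined on pairs of classes by d([g],[h]) = log(max{λ_[g]([h]), λ_[h]([g])}) is a metric on the set Â_∞ = {[g] : g ∈ A_∞, g ≠ e} of classes of nontrivial elements of A_∞; in particular it is nonnegative, vanishes exactly when [g] = [h], is symmetric, and satisfies the triangle inequality. -/

import Mathlib

/-- `g` belongs to `S_∞`: a permutation of `ℕ` with finite support. -/
def FinSupp (g : Equiv.Perm ℕ) : Prop := {x : ℕ | g x ≠ x}.Finite

/-- `g` is an even permutation: a product of an even number of transpositions. -/
def IsEvenPerm (g : Equiv.Perm ℕ) : Prop :=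
  ∃ l : List (Equiv.Perm ℕ), (∀ τ ∈ l, τ.IsSwap) ∧ Even l.length ∧ l.prod = g

/-- `g` belongs to the infinite alternating group `A_∞`. -/
def MemAinf (g : Equiv.Perm ℕ) : Prop := FinSupp g ∧ IsEvenPerm g

/-- `g` and `h` are conjugate in `S_∞` (by a finitely supported permutation). -/
def ConjS (g h : Equiv.Perm ℕ) : Prop := ∃ c, FinSupp c ∧ c * g * c⁻¹ = h

/-- `g` and `h` are conjugate in `A_∞` (by an even finitely supported permutation). -/
def ConjA (g h : Equiv.Perm ℕ) : Prop := ∃ c, MemAinf c ∧ c * g * c⁻¹ = h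

/-- the class `[h]`: the union of the `A_∞`-conjugacy classes of `h` and `h⁻¹`. -/
def cls (h : Equiv.Perm ℕ) : Set (Equiv.Perm ℕ) := {x | ConjA h x ∨ ConjA h⁻¹ x}

/-- `λ_h(g)`: the minimal `n` such that `g` is a product of `n` elements of `[h]`. -/
noncomputable def lam (h g : Equiv.Perm ℕ) : ℕ :=
  sInf {n | ∃ l : List (Equiv.Perm ℕ), l.length = n ∧ (∀ x ∈ l, x ∈ cls h) ∧ l.prod = g}

/-- the word length `λ(g)`: the minimal number of transpositions with product `g`. -/
noncomputable def wl (g : Equiv.Perm ℕ) : ℕ :=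
  sInf {n | ∃ l : List (Equiv.Perm ℕ), l.length = n ∧ (∀ τ ∈ l, τ.IsSwap) ∧ l.prod = g}

/-- `ι_k = (1 2)(3 4)⋯(2k−1 2k)`. -/
def iota (k : ℕ) : Equiv.Perm ℕ :=
  ((List.range k).map (fun i => Equiv.swap (2*i+1) (2*i+2))).prod

/-- the distance `d([g],[h]) = log(max{λ_[g]([h]), λ_[h]([g])})`. -/
noncomputable def dd (g h : Equiv.Perm ℕ) : ℝ :=
  Real.log (max (lam g h : ℝ) (lam h g : ℝ))
open Equiv Equiv.Perm

lemma finSupp_one : FinSupp 1 := by simp [FinSupp]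

lemma finSupp_mul {g h : Perm ℕ} (hg : FinSupp g) (hh : FinSupp h) : FinSupp (g * h) := by
  refine (hg.union hh).subset ?_
  intro x hx
  by_contra hmem
  simp only [Set.mem_union, Set.mem_setOf_eq, not_or, not_not] at hmem
  simp only [Set.mem_setOf_eq, Perm.mul_apply] at hx
  rw [hmem.2, hmem.1] at hx
  exact hx rfl

lemma finSupp_inv {g : Perm ℕ} (hg : FinSupp g) : FinSupp g⁻¹ := by
  refine hg.subset ?_
  intro x hx
  simp only [Set.mem_setOf_eq] at hx ⊢
  intro hgx
  exact hx (by conv_lhs => rw [← hgx, ← Perm.mul_apply, inv_mul_cancel, Perm.one_apply])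

lemma finSupp_swap (a b : ℕ) : FinSupp (Equiv.swap a b) := by
  refine Set.Finite.subset (s := {a, b}) (by simp) ?_
  intro x hx
  simp only [Set.mem_setOf_eq] at hx
  by_contra hmem
  simp only [Set.mem_insert_iff, Set.mem_singleton_iff, not_or] at hmem
  exact hx (swap_apply_of_ne_of_ne hmem.1 hmem.2)

lemma isEvenPerm_one : IsEvenPerm 1 := ⟨[], by simp, by simp, rfl⟩

lemma isEvenPerm_mul {g h : Perm ℕ} (hg : IsEvenPerm g) (hh : IsEvenPerm h) :
    IsEvenPerm (g * h) := by
  obtain ⟨l1, hs1, he1, hp1⟩ := hg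
  obtain ⟨l2, hs2, he2, hp2⟩ := hh
  exact ⟨l1 ++ l2, fun τ hτ => ((List.mem_append.1 hτ).elim (hs1 τ) (hs2 τ)),
    by rw [List.length_append]; exact he1.add he2, by rw [List.prod_append, hp1, hp2]⟩

lemma isEvenPerm_inv {g : Perm ℕ} (hg : IsEvenPerm g) : IsEvenPerm g⁻¹ := by
  obtain ⟨l, hs, he, hp⟩ := hg
  refine ⟨(l.map fun x => x⁻¹).reverse, ?_, ?_, ?_⟩
  · intro τ hτ
    rw [List.mem_reverse, List.mem_map] at hτ
    obtain ⟨σ, hσ, rfl⟩ := hτ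
    obtain ⟨a, b, hab, rfl⟩ := hs σ hσ
    exact ⟨a, b, hab, by rw [swap_inv]⟩
  · rw [List.length_reverse, List.length_map]; exact he
  · rw [← List.prod_inv_reverse, hp]

lemma memAinf_one : MemAinf 1 := ⟨finSupp_one, isEvenPerm_one⟩

lemma memAinf_mul {g h : Perm ℕ} (hg : MemAinf g) (hh : MemAinf h) : MemAinf (g * h) :=
  ⟨finSupp_mul hg.1 hh.1, isEvenPerm_mul hg.2 hh.2⟩

lemma memAinf_inv {g : Perm ℕ} (hg : MemAinf g) : MemAinf g⁻¹ :=
  ⟨finSupp_inv hg.1, isEvenPerm_inv hg.2⟩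

lemma memAinf_double_swap {a b c d : ℕ} (hab : a ≠ b) (hcd : c ≠ d) :
    MemAinf (Equiv.swap a b * Equiv.swap c d) :=
  ⟨finSupp_mul (finSupp_swap a b) (finSupp_swap c d),
   ⟨[Equiv.swap a b, Equiv.swap c d], by
      rintro τ hτ
      simp only [List.mem_cons, List.not_mem_nil, or_false] at hτ
      rcases hτ with rfl | rfl
      exacts [⟨a, b, hab, rfl⟩, ⟨c, d, hcd, rfl⟩],
    by simp, by simp⟩⟩

lemma conjA_refl (g : Perm ℕ) : ConjA g g := ⟨1, memAinf_one, by simp⟩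

lemma conjA_symm {g h : Perm ℕ} (hgh : ConjA g h) : ConjA h g := by
  obtain ⟨c, hc, rfl⟩ := hgh
  exact ⟨c⁻¹, memAinf_inv hc, by group⟩

lemma conjA_trans {g h k : Perm ℕ} (h1 : ConjA g h) (h2 : ConjA h k) : ConjA g k := by
  obtain ⟨c, hc, rfl⟩ := h1
  obtain ⟨d, hd, rfl⟩ := h2
  exact ⟨d * c, memAinf_mul hd hc, by group⟩

lemma conjA_inv {g h : Perm ℕ} (hgh : ConjA g h) : ConjA g⁻¹ h⁻¹ := by
  obtain ⟨c, hc, rfl⟩ := hgh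
  exact ⟨c, hc, by group⟩

lemma mem_cls_self (g : Perm ℕ) : g ∈ cls g := Or.inl (conjA_refl g)

lemma mem_cls_symm {g h : Perm ℕ} (hg : g ∈ cls h) : h ∈ cls g := by
  rcases hg with h1 | h1
  · exact Or.inl (conjA_symm h1)
  · have := conjA_inv (conjA_symm h1)
    rw [inv_inv] at this
    exact Or.inr this

lemma mem_cls_trans {a b x : Perm ℕ} (hab : a ∈ cls b) (hxa : x ∈ cls a) : x ∈ cls b := by
  rcases hab with h1 | h1 <;> rcases hxa with h2 | h2
  · exact Or.inl (conjA_trans h1 h2)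
  · exact Or.inr (conjA_trans (conjA_inv h1) h2)
  · exact Or.inr (conjA_trans h1 h2)
  · have h1' := conjA_inv h1
    rw [inv_inv] at h1'
    exact Or.inl (conjA_trans h1' h2)

lemma cls_eq_of_mem {g h : Perm ℕ} (hg : g ∈ cls h) : cls g = cls h := by
  ext x
  exact ⟨fun hx => mem_cls_trans hg hx, fun hx => mem_cls_trans (mem_cls_symm hg) hx⟩

lemma cls_inv_mem {h y : Perm ℕ} (hy : y ∈ cls h) : y⁻¹ ∈ cls h := by
  rcases hy with h1 | h1
  · exact Or.inr (conjA_inv h1)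
  · have := conjA_inv h1
    rw [inv_inv] at this
    exact Or.inl this

lemma cls_conj_mem {h y C : Perm ℕ} (hC : MemAinf C) (hy : y ∈ cls h) :
    C * y * C⁻¹ ∈ cls h := by
  rcases hy with ⟨D, hD, rfl⟩ | ⟨D, hD, rfl⟩
  · exact Or.inl ⟨C * D, memAinf_mul hC hD, by group⟩
  · exact Or.inr ⟨C * D, memAinf_mul hC hD, by group⟩

lemma list_prod_conj (c : Perm ℕ) (l : List (Perm ℕ)) :
    (l.map fun y => c * y * c⁻¹).prod = c * l.prod * c⁻¹ := by
  induction l with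
  | nil => simp
  | cons a t ih => simp only [List.map_cons, List.prod_cons, ih]; group

/-- every even-length product of swaps is a product of `swap a b * swap a c` blocks. -/
lemma pair_swaps : ∀ l : List (Perm ℕ), (∀ τ ∈ l, τ.IsSwap) → Even l.length →
    ∃ P : List (ℕ × ℕ × ℕ),
      (∀ p ∈ P, p.1 ≠ p.2.1 ∧ p.1 ≠ p.2.2 ∧ p.2.1 ≠ p.2.2) ∧
      (P.map fun p => Equiv.swap p.1 p.2.1 * Equiv.swap p.1 p.2.2).prod = l.prod := by
  suffices H : ∀ (n : ℕ) (l : List (Perm ℕ)), l.length = n → (∀ τ ∈ l, τ.IsSwap) →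
      Even l.length → ∃ P : List (ℕ × ℕ × ℕ),
      (∀ p ∈ P, p.1 ≠ p.2.1 ∧ p.1 ≠ p.2.2 ∧ p.2.1 ≠ p.2.2) ∧
      (P.map fun p => Equiv.swap p.1 p.2.1 * Equiv.swap p.1 p.2.2).prod = l.prod by
    exact fun l => H l.length l rfl
  intro n
  induction n using Nat.strong_induction_on with
  | _ n IH =>
  intro l hlen
  match l with
  | [] => exact fun _ _ => ⟨[], by simp, by simp⟩
  | [a] => intro _ he; simp at he
  | a :: b :: t =>
    intro hs he
    have ht : Even t.length := by
      simpa [Nat.even_add_one, Classical.not_not] using he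
    obtain ⟨P, hP1, hP2⟩ := IH t.length (by simp only [List.length_cons] at hlen; omega) t rfl
      (fun τ hτ => hs τ (by simp [hτ])) ht
    obtain ⟨x, y, hxy, rfl⟩ := hs a (by simp)
    obtain ⟨z, w, hzw, rfl⟩ := hs b (by simp)
    have key : ∃ Q : List (ℕ × ℕ × ℕ),
        (∀ p ∈ Q, p.1 ≠ p.2.1 ∧ p.1 ≠ p.2.2 ∧ p.2.1 ≠ p.2.2) ∧
        (Q.map fun p => Equiv.swap p.1 p.2.1 * Equiv.swap p.1 p.2.2).prod =
          Equiv.swap x y * Equiv.swap z w := by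
      by_cases hxz : x = z
      · subst hxz
        by_cases hyw : y = w
        · subst hyw
          exact ⟨[], by simp, by simp⟩
        · exact ⟨[(x, y, w)], by simp [hxy, hzw, hyw], by simp⟩
      · by_cases hxw : x = w
        · subst hxw
          by_cases hyz : y = z
          · subst hyz
            exact ⟨[], by simp, by rw [swap_comm y x]; simp⟩
          · refine ⟨[(x, y, z)], by simp [hxy, hyz, Ne.symm hzw], ?_⟩
            simp [swap_comm z x]
        · by_cases hyz : y = z
          · subst hyz
            refine ⟨[(y, x, w)], by simp [Ne.symm hxy, hzw, hxw], ?_⟩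
            simp [swap_comm x y]
          · by_cases hyw : y = w
            · subst hyw
              refine ⟨[(y, x, z)], by simp [Ne.symm hxy, Ne.symm hzw, hxz, hyz], ?_⟩
              simp [swap_comm x y, swap_comm z y]
            · refine ⟨[(x, y, z), (z, x, w)], ?_, ?_⟩
              · simp [hxy, hxz, hyz, Ne.symm hxz, hzw, hxw]
              · simp only [List.map_cons, List.map_nil, List.prod_cons, List.prod_nil, mul_one]
                rw [swap_comm z x]
                rw [show Equiv.swap x y * Equiv.swap x z * (Equiv.swap x z * Equiv.swap z w)
                    = Equiv.swap x y * (Equiv.swap x z * Equiv.swap x z) * Equiv.swap z w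
                    by group]
                simp
    obtain ⟨Q, hQ1, hQ2⟩ := key
    refine ⟨Q ++ P, fun p hp => (List.mem_append.1 hp).elim (hQ1 p) (hP1 p), ?_⟩
    rw [List.map_append, List.prod_append, hQ2, hP2]
    simp [mul_assoc]

/-- `ofSubtype` of an even finite permutation is in `A_∞`. -/
lemma memAinf_ofSubtype {s : Finset ℕ} (C' : Perm {n // n ∈ s})
    (hC' : Equiv.Perm.sign C' = 1) : MemAinf (Equiv.Perm.ofSubtype C') := by
  classical
  constructor
  · refine (s.finite_toSet).subset ?_
    intro x hx
    by_contra hxs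
    exact hx (Equiv.Perm.ofSubtype_apply_of_not_mem C' hxs)
  · obtain ⟨l, hl⟩ := (Equiv.Perm.truncSwapFactors C').out
    refine ⟨l.map Equiv.Perm.ofSubtype, ?_, ?_, ?_⟩
    · intro τ hτ
      rw [List.mem_map] at hτ
      obtain ⟨σ, hσ, rfl⟩ := hτ
      exact (hl.2 σ hσ).of_subtype_isSwap
    · rw [List.length_map]
      have := Equiv.Perm.sign_prod_list_swap hl.2
      rw [hl.1, hC'] at this
      exact (neg_one_pow_eq_one_iff_even (by decide)).1 this.symm
    · rw [← map_list_prod, hl.1]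

/-- any two 3-cycles of the explicit shape are conjugate by an element of `A_∞`. -/
lemma exists_even_conj_swap_pair {a b c x y z : ℕ}
    (hab : a ≠ b) (hac : a ≠ c) (hbc : b ≠ c)
    (hxy : x ≠ y) (hxz : x ≠ z) (hyz : y ≠ z) :
    ∃ C : Perm ℕ, MemAinf C ∧
      C * (Equiv.swap a b * Equiv.swap a c) * C⁻¹ = Equiv.swap x y * Equiv.swap x z := by
  classical
  set s : Finset ℕ := Finset.range 9 ∪ {a, b, c, x, y, z} with hs
  have hmem : ∀ w ∈ ({a, b, c, x, y, z} : Finset ℕ), w ∈ s := fun w hw =>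
    Finset.mem_union_right _ hw
  have ha : a ∈ s := hmem a (by simp)
  have hb : b ∈ s := hmem b (by simp)
  have hc : c ∈ s := hmem c (by simp)
  have hx : x ∈ s := hmem x (by simp)
  have hy : y ∈ s := hmem y (by simp)
  have hz : z ∈ s := hmem z (by simp)
  have h5 : 5 ≤ Nat.card {n // n ∈ s} := by
    rw [Nat.card_eq_fintype_card, Fintype.card_coe]
    calc 5 ≤ (Finset.range 9).card := by simp
    _ ≤ s.card := Finset.card_le_card Finset.subset_union_left
  set A : {n // n ∈ s} := ⟨a, ha⟩
  set B : {n // n ∈ s} := ⟨b, hb⟩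
  set Cc : {n // n ∈ s} := ⟨c, hc⟩
  set X : {n // n ∈ s} := ⟨x, hx⟩
  set Y : {n // n ∈ s} := ⟨y, hy⟩
  set Z : {n // n ∈ s} := ⟨z, hz⟩
  have hAB : A ≠ B := fun h => hab (congrArg Subtype.val h)
  have hAC : A ≠ Cc := fun h => hac (congrArg Subtype.val h)
  have hBC : B ≠ Cc := fun h => hbc (congrArg Subtype.val h)
  have hXY : X ≠ Y := fun h => hxy (congrArg Subtype.val h)
  have hXZ : X ≠ Z := fun h => hxz (congrArg Subtype.val h)
  have hYZ : Y ≠ Z := fun h => hyz (congrArg Subtype.val h)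
  have hσ : (Equiv.swap A B * Equiv.swap A Cc).IsThreeCycle :=
    Equiv.Perm.isThreeCycle_swap_mul_swap_same hAB hAC hBC
  have hτ : (Equiv.swap X Y * Equiv.swap X Z).IsThreeCycle :=
    Equiv.Perm.isThreeCycle_swap_mul_swap_same hXY hXZ hYZ
  have hconj : IsConj ((⟨_, hσ.mem_alternatingGroup⟩ : alternatingGroup {n // n ∈ s}))
      ((⟨_, hτ.mem_alternatingGroup⟩ : alternatingGroup {n // n ∈ s})) :=
    alternatingGroup.isThreeCycle_isConj h5 hσ hτ
  rw [isConj_iff] at hconj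
  obtain ⟨c₀, hc₀⟩ := hconj
  have hc₀' : (c₀ : Perm {n // n ∈ s}) * (Equiv.swap A B * Equiv.swap A Cc) *
      (c₀ : Perm {n // n ∈ s})⁻¹ = Equiv.swap X Y * Equiv.swap X Z := by
    have h2 := congrArg (Subtype.val) hc₀
    rw [Subgroup.coe_mul, Subgroup.coe_mul, Subgroup.coe_inv] at h2
    exact h2
  refine ⟨Equiv.Perm.ofSubtype (c₀ : Perm {n // n ∈ s}),
    memAinf_ofSubtype _ (Equiv.Perm.mem_alternatingGroup.1 c₀.2), ?_⟩
  have h3 := congrArg Equiv.Perm.ofSubtype hc₀'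
  rw [map_mul, map_mul, map_mul, map_mul, map_inv, Equiv.Perm.ofSubtype_swap_eq,
    Equiv.Perm.ofSubtype_swap_eq, Equiv.Perm.ofSubtype_swap_eq,
    Equiv.Perm.ofSubtype_swap_eq] at h3
  exact h3

lemma exists_cls_factorization {h g : Perm ℕ} (hh : MemAinf h) (hh1 : h ≠ 1) (hg : MemAinf g) :
    ∃ l : List (Perm ℕ), (∀ x ∈ l, x ∈ cls h) ∧ l.prod = g := by
  classical
  obtain ⟨L, hLs, hLe, hLp⟩ := hg.2
  obtain ⟨P, hP1, hP2⟩ := pair_swaps L hLs hLe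
  -- a point moved by h
  have hmoved : ∃ a, h a ≠ a := by
    by_contra hcon
    push_neg at hcon
    exact hh1 (Equiv.ext hcon)
  obtain ⟨a, hha⟩ := hmoved
  have hbsupp : h (h a) ≠ h a := fun hEq => hha (h.injective hEq)
  have hb'b : h (h a) ≠ h a := hbsupp
  have hb'supp : h (h (h a)) ≠ h (h a) := fun hEq => hb'b (h.injective hEq)
  -- fresh points
  obtain ⟨c, hc⟩ := ((hh.1.union (Set.finite_singleton 0)).infinite_compl).nonempty
  have hc' : h c = c := by
    simp only [Set.mem_compl_iff, Set.mem_union, Set.mem_setOf_eq] at hc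
    push_neg at hc
    exact hc.1
  obtain ⟨u, hu⟩ := ((hh.1.union (Set.finite_singleton c)).infinite_compl).nonempty
  have hu1 : h u = u := by
    simp only [Set.mem_compl_iff, Set.mem_union, Set.mem_setOf_eq] at hu
    push_neg at hu
    exact hu.1
  obtain ⟨v, hv⟩ := ((hh.1.union ((Set.finite_singleton u).insert c)).infinite_compl).nonempty
  have hv1 : h v = v := by
    simp only [Set.mem_compl_iff, Set.mem_union, Set.mem_setOf_eq, Set.mem_insert_iff,
      Set.mem_singleton_iff] at hv
    push_neg at hv
    exact hv.1
  have huv : u ≠ v := by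
    simp only [Set.mem_compl_iff, Set.mem_union, Set.mem_setOf_eq, Set.mem_insert_iff,
      Set.mem_singleton_iff] at hv
    push_neg at hv
    exact fun hEq => hv.2.2 hEq.symm
  set b := h a with hbdef
  set b' := h b with hb'def
  have hcb : c ≠ b := by
    intro hEq
    rw [hEq] at hc'
    exact hbsupp hc'
  have hcb' : c ≠ b' := by
    intro hEq
    rw [hEq] at hc'
    exact hb'supp hc'
  set C₀ := Equiv.swap b c * Equiv.swap u v with hC₀def
  have hC₀ : MemAinf C₀ := memAinf_double_swap (Ne.symm hcb) huv
  set h₂ := C₀ * h⁻¹ * C₀⁻¹ with hh₂def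
  have hh₂cls : h₂ ∈ cls h := Or.inr ⟨C₀, hC₀, rfl⟩
  -- the commutator is an explicit 3-cycle
  have hcomm : Equiv.swap u v * h⁻¹ = h⁻¹ * Equiv.swap u v := by
    have hd : Equiv.Perm.Disjoint (Equiv.swap u v) h⁻¹ := by
      intro x
      by_cases hx : x = u ∨ x = v
      · right
        rcases hx with rfl | rfl
        · exact (Equiv.Perm.inv_eq_iff_eq).2 hu1.symm
        · exact (Equiv.Perm.inv_eq_iff_eq).2 hv1.symm
      · push_neg at hx
        exact Or.inl (swap_apply_of_ne_of_ne hx.1 hx.2)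
    exact hd.commute.eq
  have hk : h * h₂ = Equiv.swap c b' * Equiv.swap c b := by
    have e1 : C₀ * h⁻¹ * C₀⁻¹ = Equiv.swap b c * h⁻¹ * Equiv.swap b c := by
      rw [hC₀def, mul_inv_rev, swap_inv, swap_inv]
      calc Equiv.swap b c * Equiv.swap u v * h⁻¹ * (Equiv.swap u v * Equiv.swap b c)
          = Equiv.swap b c * (Equiv.swap u v * h⁻¹ * Equiv.swap u v) * Equiv.swap b c := by
            group
        _ = Equiv.swap b c * (h⁻¹ * (Equiv.swap u v * Equiv.swap u v)) * Equiv.swap b c := by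
            rw [hcomm]; group
        _ = Equiv.swap b c * h⁻¹ * Equiv.swap b c := by
            rw [swap_mul_self, mul_one]
    rw [hh₂def, e1]
    have e2 : Equiv.swap (h b) (h c) = h * Equiv.swap b c * h⁻¹ :=
      Equiv.swap_apply_apply h b c
    rw [hc'] at e2
    calc h * (Equiv.swap b c * h⁻¹ * Equiv.swap b c)
        = (h * Equiv.swap b c * h⁻¹) * Equiv.swap b c := by group
      _ = Equiv.swap b' c * Equiv.swap b c := by rw [← e2, hb'def]
      _ = Equiv.swap c b' * Equiv.swap c b := by rw [swap_comm b' c, swap_comm b c]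
  -- each canonical 3-cycle block is a product of two elements of cls h
  have hblock : ∀ p : ℕ × ℕ × ℕ, p.1 ≠ p.2.1 → p.1 ≠ p.2.2 → p.2.1 ≠ p.2.2 →
      ∃ l : List (Perm ℕ), (∀ x ∈ l, x ∈ cls h) ∧
        l.prod = Equiv.swap p.1 p.2.1 * Equiv.swap p.1 p.2.2 := by
    rintro ⟨x, y, z⟩ h1 h2 h3
    obtain ⟨C, hC, hCeq⟩ := exists_even_conj_swap_pair hcb' hcb hb'b h1 h2 h3
    refine ⟨[C * h * C⁻¹, C * h₂ * C⁻¹], ?_, ?_⟩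
    · intro w hw
      simp only [List.mem_cons, List.not_mem_nil, or_false] at hw
      rcases hw with rfl | rfl
      · exact cls_conj_mem hC (mem_cls_self h)
      · exact cls_conj_mem hC hh₂cls
    · show (C * h * C⁻¹) * ((C * h₂ * C⁻¹) * 1) = _
      rw [mul_one, ← hCeq, ← hk]
      group
  -- assemble over the list of blocks
  have hassemble : ∀ Q : List (ℕ × ℕ × ℕ),
      (∀ p ∈ Q, p.1 ≠ p.2.1 ∧ p.1 ≠ p.2.2 ∧ p.2.1 ≠ p.2.2) →
      ∃ l : List (Perm ℕ), (∀ x ∈ l, x ∈ cls h) ∧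
        l.prod = (Q.map fun p => Equiv.swap p.1 p.2.1 * Equiv.swap p.1 p.2.2).prod := by
    intro Q
    induction Q with
    | nil => exact fun _ => ⟨[], by simp, by simp⟩
    | cons p Q ih =>
      intro hQ
      obtain ⟨d1, d2, d3⟩ := hQ p (by simp)
      obtain ⟨l1, hl1m, hl1p⟩ := hblock p d1 d2 d3
      obtain ⟨l2, hl2m, hl2p⟩ := ih (fun q hq => hQ q (by simp [hq]))
      refine ⟨l1 ++ l2, fun x hx => (List.mem_append.1 hx).elim (hl1m x) (hl2m x), ?_⟩
      rw [List.prod_append, hl1p, hl2p, List.map_cons, List.prod_cons]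
  obtain ⟨l, hlm, hlp⟩ := hassemble P hP1
  exact ⟨l, hlm, by rw [hlp, hP2, hLp]⟩

def lamSet (h g : Perm ℕ) : Set ℕ :=
  {n | ∃ l : List (Perm ℕ), l.length = n ∧ (∀ x ∈ l, x ∈ cls h) ∧ l.prod = g}

lemma lam_def (h g : Perm ℕ) : lam h g = sInf (lamSet h g) := rfl

lemma lamSet_nonempty {h g : Perm ℕ} (hh : MemAinf h) (hh1 : h ≠ 1) (hg : MemAinf g) :
    (lamSet h g).Nonempty := by
  obtain ⟨l, hm, hp⟩ := exists_cls_factorization hh hh1 hg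
  exact ⟨l.length, l, rfl, hm, hp⟩

lemma lam_mem {h g : Perm ℕ} (hh : MemAinf h) (hh1 : h ≠ 1) (hg : MemAinf g) :
    lam h g ∈ lamSet h g :=
  Nat.sInf_mem (lamSet_nonempty hh hh1 hg)

lemma lam_le {h g : Perm ℕ} {n : ℕ} (hn : n ∈ lamSet h g) : lam h g ≤ n :=
  Nat.sInf_le hn

lemma one_le_lam {h g : Perm ℕ} (hh : MemAinf h) (hh1 : h ≠ 1) (hg : MemAinf g)
    (hg1 : g ≠ 1) : 1 ≤ lam h g := by
  rcases Nat.eq_zero_or_pos (lam h g) with h0 | h1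
  · exfalso
    have := lam_mem hh hh1 hg
    rw [h0] at this
    obtain ⟨l, hlen, -, hp⟩ := this
    rw [List.length_eq_zero_iff] at hlen
    subst hlen
    exact hg1 (by simpa using hp.symm)
  · exact h1

lemma lam_eq_one_of_mem {h g : Perm ℕ} (hh : MemAinf h) (hh1 : h ≠ 1) (hg : MemAinf g)
    (hg1 : g ≠ 1) (hmem : g ∈ cls h) : lam h g = 1 :=
  le_antisymm (lam_le ⟨[g], rfl, by simpa using hmem, by simp⟩)
    (one_le_lam hh hh1 hg hg1)

lemma mem_of_lam_eq_one {h g : Perm ℕ} (hh : MemAinf h) (hh1 : h ≠ 1) (hg : MemAinf g)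
    (heq : lam h g = 1) : g ∈ cls h := by
  have := lam_mem hh hh1 hg
  rw [heq] at this
  obtain ⟨l, hlen, hm, hp⟩ := this
  rw [List.length_eq_one_iff] at hlen
  obtain ⟨x, rfl⟩ := hlen
  simp only [List.prod_cons, List.prod_nil, mul_one] at hp
  subst hp
  exact hm _ (by simp)

/-- word representations transfer along the class equivalence. -/
lemma exists_list_of_mem_cls {f g x : Perm ℕ} {n : ℕ} (hx : x ∈ cls g)
    (hl : ∃ l : List (Perm ℕ), l.length = n ∧ (∀ y ∈ l, y ∈ cls f) ∧ l.prod = g) :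
    ∃ l : List (Perm ℕ), l.length = n ∧ (∀ y ∈ l, y ∈ cls f) ∧ l.prod = x := by
  obtain ⟨l, hlen, hm, hp⟩ := hl
  have hinv : ∃ l' : List (Perm ℕ), l'.length = n ∧ (∀ y ∈ l', y ∈ cls f) ∧ l'.prod = g⁻¹ := by
    refine ⟨(l.map fun y => y⁻¹).reverse, ?_, ?_, ?_⟩
    · rw [List.length_reverse, List.length_map, hlen]
    · intro y hy
      rw [List.mem_reverse, List.mem_map] at hy
      obtain ⟨z, hz, rfl⟩ := hy
      exact cls_inv_mem (hm z hz)
    · rw [← List.prod_inv_reverse, hp]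
  rcases hx with ⟨C, hC, rfl⟩ | ⟨C, hC, rfl⟩
  · refine ⟨l.map fun y => C * y * C⁻¹, ?_, ?_, ?_⟩
    · rw [List.length_map, hlen]
    · intro y hy
      rw [List.mem_map] at hy
      obtain ⟨z, hz, rfl⟩ := hy
      exact cls_conj_mem hC (hm z hz)
    · rw [list_prod_conj, hp]
  · obtain ⟨l', hlen', hm', hp'⟩ := hinv
    refine ⟨l'.map fun y => C * y * C⁻¹, ?_, ?_, ?_⟩
    · rw [List.length_map, hlen']
    · intro y hy
      rw [List.mem_map] at hy
      obtain ⟨z, hz, rfl⟩ := hy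
      exact cls_conj_mem hC (hm' z hz)
    · rw [list_prod_conj, hp']

lemma lam_mul_le {f g h : Perm ℕ} (hf : MemAinf f) (hf1 : f ≠ 1) (hg : MemAinf g)
    (hg1 : g ≠ 1) (hh : MemAinf h) : lam f h ≤ lam g h * lam f g := by
  obtain ⟨L, hLlen, hLm, hLp⟩ := lam_mem hg hg1 hh
  have base : ∃ l : List (Perm ℕ), l.length = lam f g ∧ (∀ y ∈ l, y ∈ cls f) ∧ l.prod = g :=
    lam_mem hf hf1 hg
  have aux : ∀ L' : List (Perm ℕ), (∀ x ∈ L', x ∈ cls g) →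
      ∃ l : List (Perm ℕ), l.length = L'.length * lam f g ∧
        (∀ y ∈ l, y ∈ cls f) ∧ l.prod = L'.prod := by
    intro L'
    induction L' with
    | nil => exact fun _ => ⟨[], by simp, by simp, by simp⟩
    | cons a L' ih =>
      intro hmem
      obtain ⟨l1, hl1len, hl1m, hl1p⟩ := exists_list_of_mem_cls (hmem a (by simp)) base
      obtain ⟨l2, hl2len, hl2m, hl2p⟩ := ih (fun x hx => hmem x (by simp [hx]))
      refine ⟨l1 ++ l2, ?_, fun y hy => (List.mem_append.1 hy).elim (hl1m y) (hl2m y), ?_⟩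
      · rw [List.length_append, hl1len, hl2len, List.length_cons, Nat.succ_mul, Nat.add_comm]
      · rw [List.prod_append, hl1p, hl2p, List.prod_cons]
  obtain ⟨l, hlen, hm, hp⟩ := aux L hLm
  exact lam_le ⟨l, by rw [hlen, hLlen], hm, by rw [hp, hLp]⟩



/-- `d` is a metric on the set of classes of nontrivial elements of `A_∞`:
nonnegative, vanishing exactly when `[g] = [h]`, symmetric, and satisfying the triangle
inequality. -/
theorem stmt7 :
    (∀ g h : Equiv.Perm ℕ, MemAinf g → MemAinf h → g ≠ 1 → h ≠ 1 →
      0 ≤ dd g h) ∧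
    (∀ g h : Equiv.Perm ℕ, MemAinf g → MemAinf h → g ≠ 1 → h ≠ 1 →
      (dd g h = 0 ↔ cls g = cls h)) ∧
    (∀ g h : Equiv.Perm ℕ, MemAinf g → MemAinf h → g ≠ 1 → h ≠ 1 →
      dd g h = dd h g) ∧
    (∀ f g h : Equiv.Perm ℕ, MemAinf f → MemAinf g → MemAinf h →
      f ≠ 1 → g ≠ 1 → h ≠ 1 → dd f h ≤ dd f g + dd g h) := by
  have hone_le : ∀ g h : Equiv.Perm ℕ, MemAinf g → MemAinf h → g ≠ 1 → h ≠ 1 →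
      (1 : ℝ) ≤ max (lam g h : ℝ) (lam h g : ℝ) := by
    intro g h hg hh hg1 hh1
    have h1 : 1 ≤ lam g h := one_le_lam hg hg1 hh hh1
    exact le_max_of_le_left (by exact_mod_cast h1)
  refine ⟨?_, ?_, ?_, ?_⟩
  · intro g h hg hh hg1 hh1
    exact Real.log_nonneg (hone_le g h hg hh hg1 hh1)
  · intro g h hg hh hg1 hh1
    constructor
    · intro h0
      have hmax : max (lam g h : ℝ) (lam h g : ℝ) = 1 := by
        have h1 := hone_le g h hg hh hg1 hh1
        rcases Real.log_eq_zero.1 h0 with h2 | h2 | h2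
        · linarith
        · exact h2
        · linarith
      have hgh : lam g h = 1 := by
        have hle : (lam g h : ℝ) ≤ 1 := hmax ▸ le_max_left _ _
        have hge : 1 ≤ lam g h := one_le_lam hg hg1 hh hh1
        have : lam g h ≤ 1 := by exact_mod_cast hle
        omega
      exact (cls_eq_of_mem (mem_of_lam_eq_one hg hg1 hh hgh)).symm
    · intro hcls
      have h1 : lam g h = 1 :=
        lam_eq_one_of_mem hg hg1 hh hh1 (hcls ▸ mem_cls_self h)
      have h2 : lam h g = 1 :=
        lam_eq_one_of_mem hh hh1 hg hg1 (hcls ▸ mem_cls_self g)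
      simp [dd, h1, h2]
  · intro g h _ _ _ _
    rw [dd, dd, max_comm]
  · intro f g h hf hg hh hf1 hg1 hh1
    have hC : lam f h ≤ lam g h * lam f g := lam_mul_le hf hf1 hg hg1 hh
    have hC' : lam h f ≤ lam g f * lam h g := lam_mul_le hh hh1 hg hg1 hf
    set A : ℝ := max (lam f g : ℝ) (lam g f : ℝ) with hA
    set B : ℝ := max (lam g h : ℝ) (lam h g : ℝ) with hB
    have hA1 : (1 : ℝ) ≤ A := hone_le f g hf hg hf1 hg1
    have hB1 : (1 : ℝ) ≤ B := hone_le g h hg hh hg1 hh1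
    have hfg : (lam f g : ℝ) ≤ A := le_max_left _ _
    have hgf : (lam g f : ℝ) ≤ A := le_max_right _ _
    have hgh : (lam g h : ℝ) ≤ B := le_max_left _ _
    have hhg : (lam h g : ℝ) ≤ B := le_max_right _ _
    have hfg0 : (0 : ℝ) ≤ (lam f g : ℝ) := Nat.cast_nonneg _
    have hgh0 : (0 : ℝ) ≤ (lam g h : ℝ) := Nat.cast_nonneg _
    have key : max (lam f h : ℝ) (lam h f : ℝ) ≤ A * B := by
      have k1 : (lam f h : ℝ) ≤ A * B := by
        have : (lam f h : ℝ) ≤ (lam g h : ℝ) * (lam f g : ℝ) := by exact_mod_cast hC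
        nlinarith
      have k2 : (lam h f : ℝ) ≤ A * B := by
        have : (lam h f : ℝ) ≤ (lam g f : ℝ) * (lam h g : ℝ) := by exact_mod_cast hC'
        nlinarith
      exact max_le k1 k2
    have hpos : (0 : ℝ) < max (lam f h : ℝ) (lam h f : ℝ) :=
      lt_of_lt_of_le one_pos (hone_le f h hf hh hf1 hh1)
    calc dd f h = Real.log (max (lam f h : ℝ) (lam h f : ℝ)) := rfl
      _ ≤ Real.log (A * B) := Real.log_le_log hpos key
      _ = Real.log A + Real.log B := Real.log_mul (by linarith) (by linarith)
      _ = dd f g + dd g h := rfl
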